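/- Let q = p^r, G = (ℤ_p)^r acting diagonally on edges of K_{q,q} (shores indexed by G). Then the number of connected G-invariant subgraphs of K_{q,q} that are unions of exactly r+1 edge orbits is q·(q - p⁰)(q - p¹)⋯(q - p^{r-1}) / (r+1)!. -/

import Mathlib

/-- The bipartite graph on `G ⊕ G` whose edges are the elements of an
edge set `E ⊆ G × G`. -/
def bipGraph {G : Type*} (E : Set (G × G)) : SimpleGraph (G ⊕ G) where
  Adj v w := (∃ a b, (a, b) ∈ E ∧ v = Sum.inl a ∧ w = Sum.inr b) ∨
             (∃ a b, (a, b) ∈ E ∧ w = Sum.inl a ∧ v = Sum.inr b)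
  symm := ⟨fun v w h => h.elim (fun h => Or.inr h) (fun h => Or.inl h)⟩
  loopless := ⟨by rintro v (⟨a, b, _, rfl, h⟩ | ⟨a, b, _, rfl, h⟩) <;> simp at h⟩

/-- The `G`-orbit of the edge `e` under the diagonal action `g • (a,b) = (g+a, g+b)`. -/
def edgeOrbit {G : Type*} [Add G] (e : G × G) : Set (G × G) :=
  Set.range fun g : G => (g + e.1, g + e.2)

/-!
A `G`-invariant edge set `E` is determined by its set `D = {b - a | (a, b) ∈ E}` of differences,
and its edge orbits correspond to the elements of `D`. The graph of `E` is connected iff the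
differences `d - d₀` (`d ∈ D`, for a fixed `d₀ ∈ D`) generate `G`: walking along an edge of
difference `d` and back along one of difference `d₀` translates a left vertex by `d - d₀`.
So we count the `(r + 1)`-subsets of `𝔽_p^r` that are affine frames. Ordering them multiplies the
count by `(r + 1)!`, and an ordered frame `(t₀, …, t_r)` is a base point `t₀` together with the
linear basis `(t_i - t₀)`, giving `q · ∏ (q - p^i)`.
-/

open Function Set

section DifferenceSets

variable {V : Type*} [AddCommGroup V]

def diffEdges (D : Set V) : Set (V × V) := {e | e.2 - e.1 ∈ D}

def diffSet (E : Set (V × V)) : Set V := {d | (0, d) ∈ E}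

@[simp]
lemma mem_diffEdges {D : Set V} {e : V × V} : e ∈ diffEdges D ↔ e.2 - e.1 ∈ D := Iff.rfl

lemma diffEdges_invariant (D : Set V) :
    ∀ e ∈ diffEdges D, ∀ g : V, (g + e.1, g + e.2) ∈ diffEdges D :=
  fun _ he _ => by simpa using he

lemma diffEdges_diffSet {E : Set (V × V)} (hE : ∀ e ∈ E, ∀ g : V, (g + e.1, g + e.2) ∈ E) :
    diffEdges (diffSet E) = E := by
  ext ⟨a, b⟩
  refine ⟨fun h => by simpa using hE _ h a, fun h => ?_⟩
  simpa [diffSet, neg_add_eq_sub] using hE _ h (-a)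

lemma diffSet_diffEdges (D : Set V) : diffSet (diffEdges D) = D := by
  ext d
  simp [diffSet]

lemma edgeOrbit_eq_diffEdges (e : V × V) : edgeOrbit e = diffEdges {e.2 - e.1} := by
  ext ⟨a, b⟩
  simp only [edgeOrbit, mem_range, Prod.mk.injEq, mem_diffEdges, mem_singleton_iff]
  refine ⟨?_, fun h => ⟨a - e.1, sub_add_cancel a e.1, ?_⟩⟩
  · rintro ⟨g, rfl, rfl⟩
    abel
  · rw [sub_add_comm, ← h, sub_add_cancel]

lemma card_edgeOrbits_diffEdges (D : Set V) :
    Nat.card {O : Set (V × V) // ∃ e ∈ diffEdges D, O = edgeOrbit e} = Nat.card D := by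
  have horbits : {O : Set (V × V) | ∃ e ∈ diffEdges D, O = edgeOrbit e} =
      (fun d => diffEdges {d}) '' D := by
    ext O
    simp only [mem_ofPred_eq, mem_image, edgeOrbit_eq_diffEdges, mem_diffEdges, Prod.exists]
    refine ⟨fun ⟨a, b, hab, hO⟩ => ⟨b - a, hab, hO.symm⟩, fun ⟨d, hd, hO⟩ => ⟨0, d, ?_⟩⟩
    simpa [hO] using hd
  have hinj : Injective fun d : V => diffEdges {d} := fun d d' h => by
    simpa [diffSet_diffEdges] using congrArg diffSet h
  exact (congrArg (fun s : Set (Set (V × V)) => Nat.card s) horbits).trans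
    (Nat.card_image_of_injective hinj D)

lemma card_invariant_edgeSets (P : Set (V × V) → Prop) :
    Nat.card {E : Set (V × V) // (∀ e ∈ E, ∀ g : V, (g + e.1, g + e.2) ∈ E) ∧ P E} =
      Nat.card {D : Set V // P (diffEdges D)} :=
  Nat.card_congr
    { toFun E := ⟨diffSet E, (diffEdges_diffSet E.2.1).symm ▸ E.2.2⟩
      invFun D := ⟨diffEdges D, diffEdges_invariant D.1, D.2⟩
      left_inv E := Subtype.ext (diffEdges_diffSet E.2.1)
      right_inv D := Subtype.ext (diffSet_diffEdges D.1) }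

end DifferenceSets

lemma SimpleGraph.Reachable.apply_eq_of_forall_adj {W β : Type*} {G : SimpleGraph W}
    {f : W → β} (hf : ∀ v w, G.Adj v w → f v = f w) {u v : W} (huv : G.Reachable u v) :
    f u = f v := by
  obtain ⟨walk⟩ := huv
  induction walk with
  | nil => rfl
  | cons hadj _ ih => exact (hf _ _ hadj).trans ih

lemma bipGraph_adj_inl_inr {G : Type*} {E : Set (G × G)} {a b : G} :
    (bipGraph E).Adj (.inl a) (.inr b) ↔ (a, b) ∈ E := by
  simp [bipGraph]

section Connectivity

variable {V : Type*} [AddCommGroup V] {D : Set V} {d₀ : V}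

lemma closure_eq_top_of_connected_diffEdges (hconn : (bipGraph (diffEdges D)).Connected) :
    AddSubgroup.closure ((· - d₀) '' D) = ⊤ := by
  set H := AddSubgroup.closure ((· - d₀) '' D)
  let φ : V ⊕ V → V ⧸ H := Sum.elim (↑) (fun b => ↑(b - d₀))
  have hφ : ∀ v w, (bipGraph (diffEdges D)).Adj v w → φ v = φ w := by
    have hmem : ∀ a b, b - a ∈ D → -a + (b - d₀) ∈ H := fun a b hab =>
      AddSubgroup.subset_closure ⟨b - a, hab, by dsimp only; abel⟩
    rintro v w (⟨a, b, hab, rfl, rfl⟩ | ⟨a, b, hab, rfl, rfl⟩)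
    · exact QuotientAddGroup.eq.2 (hmem a b hab)
    · exact (QuotientAddGroup.eq.2 (hmem a b hab)).symm
  refine (AddSubgroup.eq_top_iff' H).2 fun x => ?_
  have hx : (x : V ⧸ H) = ((0 : V) : V ⧸ H) :=
    (hconn.preconnected (Sum.inl x) (Sum.inl 0)).apply_eq_of_forall_adj hφ
  simpa using QuotientAddGroup.eq.1 hx

lemma reachable_inl_add_of_mem_closure (hd₀ : d₀ ∈ D) {x : V}
    (hx : x ∈ AddSubgroup.closure ((· - d₀) '' D)) (a : V) :
    (bipGraph (diffEdges D)).Reachable (Sum.inl a) (Sum.inl (a + x)) := by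
  have adj : ∀ a b, b - a ∈ D → (bipGraph (diffEdges D)).Adj (.inl a) (.inr b) :=
    fun _ _ hab => bipGraph_adj_inl_inr.2 hab
  induction hx using AddSubgroup.closure_induction generalizing a with
  | mem x hx =>
    obtain ⟨d, hd, rfl⟩ := hx
    refine (adj a (a + d) (by simpa using hd)).reachable.trans
      (adj (a + (d - d₀)) (a + d) ?_).reachable.symm
    simpa using hd₀
  | zero => simp
  | add x y _ _ ihx ihy => simpa [add_assoc] using (ihx a).trans (ihy (a + x))
  | neg x _ ih => simpa using (ih (a + -x)).symm

lemma connected_diffEdges_iff_closure_eq_top (hd₀ : d₀ ∈ D) :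
    (bipGraph (diffEdges D)).Connected ↔ AddSubgroup.closure ((· - d₀) '' D) = ⊤ := by
  refine ⟨closure_eq_top_of_connected_diffEdges, fun htop => ?_⟩
  have hinl : ∀ x, (bipGraph (diffEdges D)).Reachable (Sum.inl 0) (Sum.inl x) := fun x => by
    simpa using reachable_inl_add_of_mem_closure hd₀ (htop ▸ AddSubgroup.mem_top x) 0
  have hbase : ∀ v, (bipGraph (diffEdges D)).Reachable (Sum.inl 0) v
    | .inl x => hinl x
    | .inr b => (hinl (b - d₀)).trans
        (bipGraph_adj_inl_inr.2 (by simpa using hd₀)).reachable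
  exact (SimpleGraph.connected_iff _).2 ⟨fun u v => (hbase u).symm.trans (hbase v), ⟨.inl 0⟩⟩

end Connectivity

lemma card_subsets_mul_factorial {α : Type*} [Finite α] (P : Set α → Prop) (n : ℕ) :
    Nat.card {D : Set α // Nat.card D = n ∧ P D} * n.factorial =
      Nat.card {t : Fin n → α // Injective t ∧ P (range t)} := by
  classical
  have : Fintype α := .ofFinite α
  have hrange : ∀ (D : Set α) (e : Fin n ≃ D), range (Subtype.val ∘ e) = D := fun D e => by
    rw [range_comp, e.range_eq_univ, image_univ, Subtype.range_coe]
  let Φ : (Σ D : {D : Set α // Nat.card D = n ∧ P D}, Fin n ≃ D.1) →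
      {t : Fin n → α // Injective t ∧ P (range t)} := fun x =>
    ⟨Subtype.val ∘ x.2, Subtype.val_injective.comp x.2.injective, (hrange _ x.2).symm ▸ x.1.2.2⟩
  have hΦ : Bijective Φ := by
    refine ⟨?_, fun ⟨t, ht, hP⟩ => ?_⟩
    · rintro ⟨⟨D, hD⟩, e⟩ ⟨⟨D', hD'⟩, e'⟩ h
      have hval : Subtype.val ∘ e = Subtype.val ∘ e' := congrArg Subtype.val h
      obtain rfl : D = D' := by rw [← hrange D e, ← hrange D' e', hval]
      obtain rfl : e = e' := Equiv.ext fun i => Subtype.ext (congrFun hval i)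
      rfl
    · refine ⟨⟨⟨range t, ?_, hP⟩, .ofInjective t ht⟩, rfl⟩
      rw [← Nat.card_congr (Equiv.ofInjective t ht), Nat.card_eq_fintype_card, Fintype.card_fin]
  have hfiber : ∀ D : {D : Set α // Nat.card D = n ∧ P D}, Nat.card (Fin n ≃ D.1) = n.factorial :=
    fun D => by
      rw [Nat.card_eq_fintype_card, Fintype.card_equiv (Finite.equivFinOfCardEq D.2.1).symm,
        Fintype.card_fin]
  rw [← Nat.card_congr (Equiv.ofBijective Φ hΦ), Nat.card_sigma, Finset.sum_congr rfl
    fun D _ => hfiber D, Finset.sum_const, Finset.card_univ, smul_eq_mul, Nat.card_eq_fintype_card]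

lemma span_zmod_eq_top_iff_closure_eq_top {M : Type*} [AddCommGroup M] (n : ℕ)
    [Module (ZMod n) M] (s : Set M) :
    Submodule.span (ZMod n) s = ⊤ ↔ AddSubgroup.closure s = ⊤ := by
  have h : AddSubgroup.toZModSubmodule n (AddSubgroup.closure s) = Submodule.span (ZMod n) s :=
    le_antisymm (fun _ hx => (AddSubgroup.closure_le (Submodule.span (ZMod n) s).toAddSubgroup).2
      Submodule.subset_span hx)
      (Submodule.span_le.2 AddSubgroup.subset_closure)
  rw [← h, map_eq_top_iff]

lemma injective_of_linearIndependent_sub {K V : Type*} [Ring K] [Nontrivial K] [AddCommGroup V]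
    [Module K V] {n : ℕ} {t : Fin (n + 1) → V}
    (h : LinearIndependent K fun i : Fin n => t i.succ - t 0) : Injective t := by
  have hcons : (· - t 0) ∘ t = Fin.cons 0 fun i : Fin n => t i.succ - t 0 := by
    ext i
    cases i using Fin.cases <;> simp
  refine Injective.of_comp (f := (· - t 0)) ?_
  rw [hcons, Fin.cons_injective_iff]
  exact ⟨fun ⟨i, hi⟩ => h.ne_zero i hi, h.injective⟩

section AffineFrames

variable {p : ℕ} [Fact p.Prime] {V : Type*} [AddCommGroup V] [Module (ZMod p) V]
  [FiniteDimensional (ZMod p) V] {r : ℕ}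

lemma connected_diffEdges_range_iff (hV : Module.finrank (ZMod p) V = r) (t : Fin (r + 1) → V) :
    (bipGraph (diffEdges (range t))).Connected ↔
      LinearIndependent (ZMod p) fun i : Fin r => t i.succ - t 0 := by
  have hcard : Fintype.card (Fin r) = Module.finrank (ZMod p) V := by simp [hV]
  rw [connected_diffEdges_iff_closure_eq_top (mem_range_self 0),
    ← span_zmod_eq_top_iff_closure_eq_top p, ← range_comp, Fin.range_fin_succ]
  simp only [comp_apply, sub_self, Submodule.span_insert_zero]
  exact ⟨fun h => linearIndependent_of_top_le_span_of_card_eq_finrank h.ge hcard,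
    fun h => h.span_eq_top_of_card_eq_finrank' hcard⟩

lemma injective_and_connected_diffEdges_range_iff (hV : Module.finrank (ZMod p) V = r)
    (t : Fin (r + 1) → V) :
    Injective t ∧ (bipGraph (diffEdges (range t))).Connected ↔
      LinearIndependent (ZMod p) fun i : Fin r => t i.succ - t 0 :=
  ⟨fun h => (connected_diffEdges_range_iff hV t).1 h.2,
    fun h => ⟨injective_of_linearIndependent_sub h, (connected_diffEdges_range_iff hV t).2 h⟩⟩

variable (V) in
noncomputable def affineFrameEquiv (hV : Module.finrank (ZMod p) V = r) :
    {t : Fin (r + 1) → V // Injective t ∧ (bipGraph (diffEdges (range t))).Connected} ≃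
      V × {s : Fin r → V // LinearIndependent (ZMod p) s} where
  toFun t := (t.1 0, ⟨fun i => t.1 i.succ - t.1 0,
    (injective_and_connected_diffEdges_range_iff hV t.1).1 t.2⟩)
  invFun x := ⟨Fin.cons x.1 fun i => x.1 + x.2.1 i,
    (injective_and_connected_diffEdges_range_iff hV _).2 (by simpa using x.2.2)⟩
  left_inv t := Subtype.ext <| funext fun i => by cases i using Fin.cases <;> simp
  right_inv x := by simp

end AffineFrames

theorem stmt9_general (p r : ℕ) [Fact p.Prime] :
    (Nat.card {E : Set ((Fin r → ZMod p) × (Fin r → ZMod p)) //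
        (∀ e ∈ E, ∀ g : Fin r → ZMod p, (g + e.1, g + e.2) ∈ E) ∧
        Nat.card {O : Set ((Fin r → ZMod p) × (Fin r → ZMod p)) //
          ∃ e ∈ E, O = edgeOrbit e} = r + 1 ∧
        (bipGraph E).Connected}) * (r + 1).factorial =
      p ^ r * ∏ i ∈ Finset.range r, (p ^ r - p ^ i) := by
  have hV : Module.finrank (ZMod p) (Fin r → ZMod p) = r := by simp
  have hsets := card_invariant_edgeSets fun E : Set ((Fin r → ZMod p) × (Fin r → ZMod p)) =>
    Nat.card {O // ∃ e ∈ E, O = edgeOrbit e} = r + 1 ∧ (bipGraph E).Connected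
  simp only [card_edgeOrbits_diffEdges] at hsets
  rw [hsets, card_subsets_mul_factorial (fun D => (bipGraph (diffEdges D)).Connected),
    Nat.card_congr (affineFrameEquiv _ hV), Nat.card_prod, card_linearIndependent hV.ge,
    Fin.prod_univ_eq_prod_range (fun i => Fintype.card (ZMod p) ^ _ - Fintype.card (ZMod p) ^ i)]
  simp [hV]

/-- For `q = p^r` and `G = (ℤ_p)^r` acting diagonally on the edges of
`K_{q,q}` (shores indexed by `G`), the number of connected `G`-invariant subgraphs
of `K_{q,q}` that are unions of exactly `r+1` edge orbits equals
`q·(q-p⁰)(q-p¹)⋯(q-p^(r-1)) / (r+1)!`  (stated multiplied through by `(r+1)!`). -/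
theorem stmt9 (p r : ℕ) [Fact p.Prime] (hr : 1 ≤ r) :
    (Nat.card {E : Set ((Fin r → ZMod p) × (Fin r → ZMod p)) //
        (∀ e ∈ E, ∀ g : Fin r → ZMod p, (g + e.1, g + e.2) ∈ E) ∧
        Nat.card {O : Set ((Fin r → ZMod p) × (Fin r → ZMod p)) //
          ∃ e ∈ E, O = edgeOrbit e} = r + 1 ∧
        (bipGraph E).Connected}) * (r + 1).factorial =
      p ^ r * ∏ i ∈ Finset.range r, (p ^ r - p ^ i) :=
  stmt9_general p r
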